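/- Let T' be a tree with diameter at least 3 satisfying γ_{t,coi}(T') = |V(T')| - β(T'), and let v be a vertex of T' belonging to some minimum total co-independent dominating set of T'. Let T be obtained from T' by adding a path u₁u₂ (two new vertices with an edge between them) and the edge u₁v. Then γ_{t,coi}(T) = |V(T)| - β(T). -/

import Mathlib

open scoped Classical

/-- A set `D` is a total co-independent dominating set of `G`:
it is a total dominating set and its complement is a nonempty independent set. -/
def TotalCoIndep {V : Type*} [Fintype V] (G : SimpleGraph V) (D : Finset V) : Prop :=
  (∀ v : V, ∃ u ∈ D, G.Adj v u) ∧
  (Dᶜ : Finset V).Nonempty ∧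
  ∀ u ∈ (Dᶜ : Finset V), ∀ w ∈ (Dᶜ : Finset V), ¬ G.Adj u w

/-- The total co-independent domination number. -/
noncomputable def gammaTcoi {V : Type*} [Fintype V] (G : SimpleGraph V) : ℕ :=
  sInf {k | ∃ D : Finset V, TotalCoIndep G D ∧ D.card = k}

/-- A finite set of vertices is independent. -/
def IsIndepF {V : Type*} (G : SimpleGraph V) (B : Finset V) : Prop :=
  ∀ u ∈ B, ∀ w ∈ B, ¬ G.Adj u w

/-- The independence number. -/
noncomputable def indepNum {V : Type*} [Fintype V] (G : SimpleGraph V) : ℕ :=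
  sSup {k | ∃ B : Finset V, IsIndepF G B ∧ B.card = k}

/-- A leaf: a vertex with exactly one neighbor (degree one). -/
def IsLeaf {V : Type*} (G : SimpleGraph V) (v : V) : Prop :=
  ∃! u, G.Adj v u

/-- The set of leaves. -/
noncomputable def leaves {V : Type*} [Fintype V] (G : SimpleGraph V) : Finset V :=
  Finset.univ.filter (fun v => IsLeaf G v)

/-- A support vertex: a non-leaf adjacent to a leaf. -/
def IsSupport {V : Type*} (G : SimpleGraph V) (v : V) : Prop :=
  ¬ IsLeaf G v ∧ ∃ u, G.Adj v u ∧ IsLeaf G u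

/-- A semi-support vertex: a non-leaf, non-support vertex adjacent to a support vertex. -/
def IsSemiSupport {V : Type*} (G : SimpleGraph V) (v : V) : Prop :=
  ¬ IsLeaf G v ∧ ¬ IsSupport G v ∧ ∃ u, G.Adj v u ∧ IsSupport G u

/-- An isolated support vertex: a support vertex with no support vertex as neighbor. -/
def IsIsolatedSupport {V : Type*} (G : SimpleGraph V) (v : V) : Prop :=
  IsSupport G v ∧ ∀ u, G.Adj v u → ¬ IsSupport G u

/-!
Adding `u₁` to a minimum total co-independent dominating set of `T'` containing `v` gives one
of `T`, so `γ_{t,coi}(T) ≤ γ_{t,coi}(T') + 1 = n(T') - β(T') + 1`. On the other hand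
`β(T) = β(T') + 1`, so this is `n(T) - β(T)`, which is a lower bound for `γ_{t,coi}` in every
graph admitting a total co-independent dominating set, since the complement of such a set is
independent.
-/

lemma isIndepF_empty {V : Type*} (G : SimpleGraph V) : IsIndepF G ∅ := by
  simp [IsIndepF]

section IndepNum

variable {V : Type*} [Fintype V] {G : SimpleGraph V}

lemma indepNum_bddAbove (G : SimpleGraph V) :
    BddAbove {k | ∃ B : Finset V, IsIndepF G B ∧ B.card = k} :=
  ⟨Fintype.card V, by rintro k ⟨B, -, rfl⟩; exact B.card_le_univ⟩

lemma IsIndepF.card_le_indepNum {B : Finset V} (hB : IsIndepF G B) : B.card ≤ indepNum G :=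
  le_csSup (indepNum_bddAbove G) ⟨B, hB, rfl⟩

lemma indepNum_le {k : ℕ} (h : ∀ B : Finset V, IsIndepF G B → B.card ≤ k) :
    indepNum G ≤ k :=
  csSup_le ⟨0, ∅, isIndepF_empty G, rfl⟩ (by rintro _ ⟨B, hB, rfl⟩; exact h B hB)

lemma indepNum_le_card (G : SimpleGraph V) : indepNum G ≤ Fintype.card V :=
  indepNum_le fun B _ => B.card_le_univ

lemma exists_isIndepF_card_eq_indepNum (G : SimpleGraph V) :
    ∃ B : Finset V, IsIndepF G B ∧ B.card = indepNum G :=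
  Nat.sSup_mem (s := {k | ∃ B : Finset V, IsIndepF G B ∧ B.card = k})
    ⟨0, ∅, isIndepF_empty G, rfl⟩ (indepNum_bddAbove G)

end IndepNum

section GammaTcoi

variable {V : Type*} [Fintype V] {G : SimpleGraph V}

lemma TotalCoIndep.gammaTcoi_le_card {D : Finset V} (hD : TotalCoIndep G D) :
    gammaTcoi G ≤ D.card :=
  Nat.sInf_le ⟨D, hD, rfl⟩

lemma card_sub_indepNum_le_gammaTcoi (h : ∃ D, TotalCoIndep G D) :
    Fintype.card V - indepNum G ≤ gammaTcoi G := by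
  obtain ⟨D, hD, hDcard⟩ := Nat.sInf_mem (s := {k | ∃ D, TotalCoIndep G D ∧ D.card = k})
    (let ⟨D, hD⟩ := h; ⟨_, D, hD, rfl⟩)
  have hcompl : Dᶜ.card ≤ indepNum G := IsIndepF.card_le_indepNum hD.2.2
  rw [gammaTcoi, ← hDcard, ← Finset.card_add_card_compl D]
  omega

end GammaTcoi

namespace SimpleGraph

variable {V : Type*}

/-- The new vertices `inr 0` and `inr 1` are the paper's `u₁` and `u₂`. -/
def attachPendantPath (G : SimpleGraph V) (v : V) : SimpleGraph (V ⊕ Fin 2) where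
  Adj
    | .inl a, .inl b => G.Adj a b
    | .inl a, .inr i => a = v ∧ i = 0
    | .inr i, .inl a => a = v ∧ i = 0
    | .inr i, .inr j => i ≠ j
  symm := ⟨by
    rintro (a | i) (b | j) h
    exacts [h.symm, h, h, Ne.symm h]⟩
  loopless := ⟨by
    rintro (a | i) h
    exacts [G.loopless.irrefl a h, h rfl]⟩

variable {G : SimpleGraph V} {v : V}

@[simp] lemma attachPendantPath_adj_inl_inl {a b : V} :
    (G.attachPendantPath v).Adj (.inl a) (.inl b) ↔ G.Adj a b := Iff.rfl

@[simp] lemma attachPendantPath_adj_inl_inr {a : V} {i : Fin 2} :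
    (G.attachPendantPath v).Adj (.inl a) (.inr i) ↔ a = v ∧ i = 0 := Iff.rfl

@[simp] lemma attachPendantPath_adj_inr_inl {a : V} {i : Fin 2} :
    (G.attachPendantPath v).Adj (.inr i) (.inl a) ↔ a = v ∧ i = 0 := Iff.rfl

@[simp] lemma attachPendantPath_adj_inr_inr {i j : Fin 2} :
    (G.attachPendantPath v).Adj (.inr i) (.inr j) ↔ i ≠ j := Iff.rfl

lemma eq_attachPendantPath {T : SimpleGraph (V ⊕ Fin 2)}
    (hT : ∀ x y : V ⊕ Fin 2, T.Adj x y ↔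
      (∃ a b : V, x = Sum.inl a ∧ y = Sum.inl b ∧ G.Adj a b) ∨
      (x = Sum.inl v ∧ y = Sum.inr 0) ∨ (x = Sum.inr 0 ∧ y = Sum.inl v) ∨
      (x = Sum.inr 0 ∧ y = Sum.inr 1) ∨ (x = Sum.inr 1 ∧ y = Sum.inr 0)) :
    T = G.attachPendantPath v := by
  ext x y
  rw [hT]
  rcases x with a | i <;> rcases y with b | j
  · simp
  · simp [eq_comm]
  · simp [eq_comm, and_comm]
  · fin_cases i <;> fin_cases j <;> simp

end SimpleGraph

section AttachPendantPath

variable {V : Type*} [Fintype V] {G : SimpleGraph V} {v : V}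

/-- A maximum independent set of `G` extends by the new leaf `inr 1`, and no independent set
can contain both new vertices. -/
lemma indepNum_attachPendantPath : indepNum (G.attachPendantPath v) = indepNum G + 1 := by
  apply le_antisymm
  · refine indepNum_le fun B hB => ?_
    have hleft : B.toLeft.card ≤ indepNum G := IsIndepF.card_le_indepNum fun a ha b hb hab =>
      hB _ (Finset.mem_toLeft.1 ha) _ (Finset.mem_toLeft.1 hb) hab
    have hright : B.toRight.card ≤ 1 := by
      by_contra! h
      have huniv : B.toRight = Finset.univ := Finset.eq_univ_of_card _
        (le_antisymm (Finset.card_le_univ _) (by simp only [Fintype.card_fin]; omega))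
      have h0 : Sum.inr 0 ∈ B := Finset.mem_toRight.1 (huniv ▸ Finset.mem_univ 0)
      have h1 : Sum.inr 1 ∈ B := Finset.mem_toRight.1 (huniv ▸ Finset.mem_univ 1)
      exact hB _ h0 _ h1 (by simp)
    rw [← Finset.card_toLeft_add_card_toRight]
    omega
  · obtain ⟨B, hB, hBcard⟩ := exists_isIndepF_card_eq_indepNum G
    have hindep : IsIndepF (G.attachPendantPath v) (B.disjSum {1}) := by
      rintro (a | i) ha (b | j) hb hab <;>
        simp only [Finset.inl_mem_disjSum, Finset.inr_mem_disjSum,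
          Finset.mem_singleton] at ha hb
      · exact hB a ha b hb hab
      · simp [hb] at hab
      · simp [ha] at hab
      · simp [ha, hb] at hab
    simpa [Finset.card_disjSum, hBcard] using hindep.card_le_indepNum

lemma TotalCoIndep.disjSum_attachPendantPath {D : Finset V} (hD : TotalCoIndep G D)
    (hv : v ∈ D) : TotalCoIndep (G.attachPendantPath v) (D.disjSum {0}) := by
  obtain ⟨hdom, -, hindep⟩ := hD
  refine ⟨?_, ⟨.inr 1, by simp⟩, ?_⟩
  · rintro (a | i)
    · obtain ⟨u, hu, hau⟩ := hdom a
      exact ⟨.inl u, by simpa using hu, hau⟩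
    · fin_cases i
      · exact ⟨.inl v, by simpa using hv, by simp⟩
      · exact ⟨.inr 0, by simp, by simp⟩
  · rintro (a | i) ha (b | j) hb hab <;>
      simp only [Finset.mem_compl, Finset.inl_mem_disjSum, Finset.inr_mem_disjSum,
        Finset.mem_singleton] at ha hb
    · exact hindep a (Finset.mem_compl.2 ha) b (Finset.mem_compl.2 hb) hab
    · exact ha (by simpa using hab.1 ▸ hv)
    · exact hb (by simpa using hab.1 ▸ hv)
    · fin_cases i <;> fin_cases j <;> simp_all

end AttachPendantPath

theorem stmt9_general {V' : Type*} [Fintype V'] (T' : SimpleGraph V')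
    (hval : gammaTcoi T' = Fintype.card V' - indepNum T')
    (v : V') (hv : ∃ D : Finset V', TotalCoIndep T' D ∧ D.card = gammaTcoi T' ∧ v ∈ D)
    (T : SimpleGraph (V' ⊕ Fin 2))
    (hT : ∀ x y : V' ⊕ Fin 2, T.Adj x y ↔
      (∃ a b : V', x = Sum.inl a ∧ y = Sum.inl b ∧ T'.Adj a b) ∨
      (x = Sum.inl v ∧ y = Sum.inr 0) ∨ (x = Sum.inr 0 ∧ y = Sum.inl v) ∨
      (x = Sum.inr 0 ∧ y = Sum.inr 1) ∨ (x = Sum.inr 1 ∧ y = Sum.inr 0)) :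
    gammaTcoi T = Fintype.card (V' ⊕ Fin 2) - indepNum T := by
  obtain ⟨D, hD, hDcard, hvD⟩ := hv
  obtain rfl := SimpleGraph.eq_attachPendantPath hT
  have hD' := hD.disjSum_attachPendantPath hvD
  have hupper : gammaTcoi (T'.attachPendantPath v) ≤ D.card + 1 := by
    simpa [Finset.card_disjSum] using hD'.gammaTcoi_le_card
  have hlower := card_sub_indepNum_le_gammaTcoi ⟨_, hD'⟩
  have hβ := indepNum_le_card T'
  rw [indepNum_attachPendantPath, Fintype.card_sum, Fintype.card_fin] at hlower ⊢
  omega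

/-- Operation O₂: attaching a path `P₂` to a vertex of some minimum total co-independent
dominating set preserves `γ_{t,coi} = n - β`. -/
theorem stmt9 {V' : Type*} [Fintype V'] (T' : SimpleGraph V') (hT' : T'.IsTree)
    (hdiam : ∃ x y : V', 3 ≤ T'.dist x y)
    (hval : gammaTcoi T' = Fintype.card V' - indepNum T')
    (v : V') (hv : ∃ D : Finset V', TotalCoIndep T' D ∧ D.card = gammaTcoi T' ∧ v ∈ D)
    (T : SimpleGraph (V' ⊕ Fin 2))
    (hT : ∀ x y : V' ⊕ Fin 2, T.Adj x y ↔
      (∃ a b : V', x = Sum.inl a ∧ y = Sum.inl b ∧ T'.Adj a b) ∨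
      (x = Sum.inl v ∧ y = Sum.inr 0) ∨ (x = Sum.inr 0 ∧ y = Sum.inl v) ∨
      (x = Sum.inr 0 ∧ y = Sum.inr 1) ∨ (x = Sum.inr 1 ∧ y = Sum.inr 0)) :
    gammaTcoi T = Fintype.card (V' ⊕ Fin 2) - indepNum T :=
  stmt9_general T' hval v hv T hT
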